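/- Let x_1, ..., x_t ∈ ℝ^d with ‖x_s‖ ≤ 1 for all s. Define V̄_s = I + ∑_{r=1}^s x_r x_rᵀ. Then ∑_{s=1}^t ‖V̄_{s-1}^{-1/2} x_s‖² ≤ 2 log det(V̄_t). -/

import Mathlib

open Matrix Finset

private lemma ep_outer_psd {d : ℕ} (v : Fin d → ℝ) : (vecMulVec v v).PosSemidef := by
  rw [vecMulVec_eq Unit]
  have := posSemidef_conjTranspose_mul_self (replicateRow Unit v)
  simpa [conjTranspose_replicateRow] using this

private lemma ep_log_bound (u : ℝ) (h0 : 0 ≤ u) (h1 : u ≤ 1) : u ≤ 2 * Real.log (1 + u) := by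
  have h2 : Real.exp (u/2) ≤ 1 + u := by
    have h := Real.add_one_le_exp (-(u/2))
    have h3 : Real.exp (u/2) * (1 - u/2) ≤ 1 := by
      have := mul_le_mul_of_nonneg_left h (Real.exp_nonneg (u/2))
      rw [← Real.exp_add] at this
      simp at this
      nlinarith [Real.exp_nonneg (u/2)]
    nlinarith
  have := Real.le_log_iff_exp_le (by linarith : (0:ℝ) < 1 + u) |>.2 h2
  linarith

private lemma ep_det_lemma {d : ℕ} (A : Matrix (Fin d) (Fin d) ℝ) (hA : A.PosDef)
    (v : Fin d → ℝ) :
    (A + vecMulVec v v).det = A.det * (1 + v ⬝ᵥ (A⁻¹ *ᵥ v)) := by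
  rw [vecMulVec_eq Unit, det_add_replicateCol_mul_replicateRow hA.det_pos.ne'.isUnit v v]
  congr 1
  rw [det_unique]
  simp [Matrix.mul_apply, dotProduct, mulVec, dotProduct, Finset.mul_sum, mul_comm]
  rw [Finset.sum_comm]
  exact Finset.sum_congr rfl fun i _ => Finset.sum_congr rfl fun j _ => by ring

theorem elliptical_potential (d t : ℕ) (x : ℕ → Fin d → ℝ)
    (hx : ∀ s, Real.sqrt (∑ i, x s i ^ 2) ≤ 1)
    (Vbar : ℕ → Matrix (Fin d) (Fin d) ℝ)
    (hV : ∀ s, Vbar s = 1 + ∑ r ∈ Finset.range s, vecMulVec (x r) (x r)) :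
    ∑ s ∈ Finset.range t, (x s) ⬝ᵥ ((Vbar s)⁻¹ *ᵥ (x s))
      ≤ 2 * Real.log (Vbar t).det := by
  -- P s is positive semidefinite
  have hPsd : ∀ s : ℕ, (∑ r ∈ Finset.range s, vecMulVec (x r) (x r)).PosSemidef := by
    intro s
    induction s with
    | zero => simpa using Matrix.PosSemidef.zero
    | succ n ih =>
      rw [Finset.sum_range_succ]
      exact ih.add (ep_outer_psd (x n))
  have hVpd : ∀ s : ℕ, (Vbar s).PosDef := by
    intro s
    rw [hV s]
    exact Matrix.PosDef.add_posSemidef Matrix.PosDef.one (hPsd s)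
  -- norm bound
  have hxx : ∀ s, (x s) ⬝ᵥ (x s) ≤ 1 := by
    intro s
    have h1 : (0:ℝ) ≤ ∑ i, x s i ^ 2 := Finset.sum_nonneg fun i _ => sq_nonneg _
    have h2 : ∑ i, x s i ^ 2 ≤ 1 := by
      have := Real.sqrt_le_sqrt (le_of_eq (rfl : ∑ i, x s i ^ 2 = ∑ i, x s i ^ 2))
      nlinarith [Real.sq_sqrt h1, hx s, Real.sqrt_nonneg (∑ i, x s i ^ 2)]
    calc (x s) ⬝ᵥ (x s) = ∑ i, x s i ^ 2 := by
          simp [dotProduct, sq]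
      _ ≤ 1 := h2
  -- the quadratic form values
  set u : ℕ → ℝ := fun s => (x s) ⬝ᵥ ((Vbar s)⁻¹ *ᵥ (x s)) with hu
  have hu0 : ∀ s, 0 ≤ u s := by
    intro s
    have := ((hVpd s).inv.posSemidef).dotProduct_mulVec_nonneg (x s)
    simpa using this
  have hu1 : ∀ s, u s ≤ 1 := by
    intro s
    set y : Fin d → ℝ := (Vbar s)⁻¹ *ᵥ (x s) with hy
    have hxy : x s = (Vbar s) *ᵥ y := by
      rw [hy, Matrix.mulVec_mulVec, Matrix.mul_nonsing_inv _ (hVpd s).det_pos.ne'.isUnit,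
        Matrix.one_mulVec]
    set P := ∑ r ∈ Finset.range s, vecMulVec (x r) (x r) with hP
    have hVy : (Vbar s) *ᵥ y = y + P *ᵥ y := by
      rw [hV s, Matrix.add_mulVec, Matrix.one_mulVec]
    have hPy : 0 ≤ y ⬝ᵥ (P *ᵥ y) := by
      have := (hPsd s).dotProduct_mulVec_nonneg y
      simpa using this
    have hPyPy : 0 ≤ (P *ᵥ y) ⬝ᵥ (P *ᵥ y) := by
      simp only [dotProduct]
      exact Finset.sum_nonneg fun i _ => mul_self_nonneg _
    have key : u s ≤ (x s) ⬝ᵥ (x s) := by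
      have hus : u s = (x s) ⬝ᵥ y := rfl
      calc u s = (x s) ⬝ᵥ y := hus
        _ ≤ (x s) ⬝ᵥ (x s) := by
            rw [hxy, hVy]
            simp only [add_dotProduct, dotProduct_add]
            have hsym : (P *ᵥ y) ⬝ᵥ y = y ⬝ᵥ (P *ᵥ y) := dotProduct_comm _ _
            linarith [hPy, hPyPy, hsym.le, hsym.ge]
    exact key.trans (hxx s)
  -- determinant recursion
  have hdet : ∀ s : ℕ, (Vbar (s+1)).det = (Vbar s).det * (1 + u s) := by
    intro s
    have : Vbar (s+1) = Vbar s + vecMulVec (x s) (x s) := by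
      rw [hV (s+1), hV s, Finset.sum_range_succ, add_assoc]
    rw [this, ep_det_lemma (Vbar s) (hVpd s) (x s)]
  -- log recursion
  have hlog : ∀ s : ℕ, Real.log (Vbar (s+1)).det
      = Real.log (Vbar s).det + Real.log (1 + u s) := by
    intro s
    rw [hdet s, Real.log_mul (hVpd s).det_pos.ne' (by linarith [hu0 s] : (1:ℝ) + u s ≠ 0)]
  -- termwise bound
  have hterm : ∀ s : ℕ, u s ≤ 2 * (Real.log (Vbar (s+1)).det - Real.log (Vbar s).det) := by
    intro s
    rw [hlog s]
    have := ep_log_bound (u s) (hu0 s) (hu1 s)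
    linarith
  calc ∑ s ∈ Finset.range t, u s
      ≤ ∑ s ∈ Finset.range t,
          2 * (Real.log (Vbar (s+1)).det - Real.log (Vbar s).det) :=
        Finset.sum_le_sum fun s _ => hterm s
    _ = 2 * (Real.log (Vbar t).det - Real.log (Vbar 0).det) := by
        rw [← Finset.mul_sum, Finset.sum_range_sub (fun s => Real.log (Vbar s).det)]
    _ = 2 * Real.log (Vbar t).det := by
        rw [hV 0]
        simp
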